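/- For every decision node x and every buyer i, the threshold price is at least the baseline price: p_i(x) ≥ β_i(x). -/

import Mathlib

open Finset

noncomputable section

/-- The opponent of buyer `i`. -/
def other (i : Fin 2) : Fin 2 := 1 - i

/-- The standard unit vector of buyer `i`: winning one item moves `x` to `x + e i`. -/
def e (i : Fin 2) : Fin 2 → ℕ := Pi.single i 1

/-- Remaining supply `t(x) = T - x₁ - x₂` at node `x`. -/
def supply (T : ℕ) (x : Fin 2 → ℕ) : ℕ := T - (x 0 + x 1)

/-- `x` is a decision node: `x₁ + x₂ < T`. -/
def IsDecision (T : ℕ) (x : Fin 2 → ℕ) : Prop := x 0 + x 1 < T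

/-- Incremental value `v_i(k|x) = v_i(x_i + k)`. -/
def val (v : Fin 2 → ℕ → ℝ) (i : Fin 2) (k : ℕ) (x : Fin 2 → ℕ) : ℝ := v i (x i + k)

/-- Valuations are nonnegative and weakly decreasing. -/
def Admissible (v : Fin 2 → ℕ → ℝ) : Prop := ∀ i k, 0 ≤ v i k ∧ v i (k + 1) ≤ v i k

/-- Greedy payoff `μ̄_i(k|x) = Σ_{j=1}^k v_i(j|x) - k · v_{-i}(t-k+1|x)`. -/
def gbar (T : ℕ) (v : Fin 2 → ℕ → ℝ) (i : Fin 2) (k : ℕ) (x : Fin 2 → ℕ) : ℝ :=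
  (∑ j ∈ Finset.Icc 1 k, val v i j x) - (k : ℝ) * val v (other i) (supply T x - k + 1) x

/-- Greedy utility `μ_i(x) = max_{0 ≤ k ≤ t} μ̄_i(k|x)` (equal to `0` at terminal nodes). -/
def gu (T : ℕ) (v : Fin 2 → ℕ → ℝ) (i : Fin 2) (x : Fin 2 → ℕ) : ℝ :=
  Finset.sup' (Finset.range (supply T x + 1)) Finset.nonempty_range_add_one
    (fun k => gbar T v i k x)

/-- Greedy demand `κ_i(x)`: the least `k ∈ {0,…,t}` attaining the greedy utility. -/
def gd (T : ℕ) (v : Fin 2 → ℕ → ℝ) (i : Fin 2) (x : Fin 2 → ℕ) : ℕ :=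
  sInf {k | k ≤ supply T x ∧ gbar T v i k x = gu T v i x}

/-- Duopsony factor `f_i(x) = max ({k ∈ {1,…,t} : v_i(k|x) > v_{-i}(t-k+1|x)} ∪ {0})`. -/
def df (T : ℕ) (v : Fin 2 → ℕ → ℝ) (i : Fin 2) (x : Fin 2 → ℕ) : ℕ :=
  sSup {k | 1 ≤ k ∧ k ≤ supply T x ∧
    val v (other i) (supply T x - k + 1) x < val v i k x}

/-- Baseline price `β_i(x)`. -/
def base (T : ℕ) (v : Fin 2 → ℕ → ℝ) (i : Fin 2) (x : Fin 2 → ℕ) : ℝ :=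
  if df T v i x = 0 then val v i 1 x
  else val v (other i) (supply T x - gd T v i x + 1) x

/-- Threshold price `p_i(x) = v_i(1|x) + μ_i(x+e_i) - μ_i(x+e_{-i})`. -/
def tp (T : ℕ) (v : Fin 2 → ℕ → ℝ) (i : Fin 2) (x : Fin 2 → ℕ) : ℝ :=
  val v i 1 x + gu T v i (x + e i) - gu T v i (x + e (other i))

/-!
Write `y = x + e_i` and `z = x + e_{-i}`. Moving to `z` shifts the opponent's values by one while
the remaining supply drops by one, so every greedy payoff at `z` is one at `x`: `μ_i(z) ≤ μ_i(x)`.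
Moving to `y` shifts buyer `i`'s own values, so `v_i(1|x) + μ̄_i(k-1|y) = μ̄_i(k|x) + v_{-i}(t-k+1|x)`.
If `f_i(x) = 0`, every greedy payoff at `x` is `≤ 0`, and `μ_i(y) ≥ 0 ≥ μ_i(z)` gives
`p_i(x) ≥ v_i(1|x)`. If `f_i(x) > 0`, then `μ̄_i(1|x) > 0`, so `κ = κ_i(x) ≥ 1`, and the identity at
`k = κ` gives `p_i(x) ≥ μ_i(x) + v_{-i}(t-κ+1|x) - μ_i(z) ≥ β_i(x)`.
-/

lemma Finset.sum_Icc_one_succ {M : Type*} [AddCommMonoid M] (f : ℕ → M) (k : ℕ) :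
    ∑ j ∈ Icc 1 (k + 1), f j = f 1 + ∑ j ∈ Icc 1 k, f (j + 1) := by
  induction k with
  | zero => simp
  | succ k ih =>
    rw [sum_Icc_succ_top (by omega), ih, sum_Icc_succ_top (by omega), add_assoc]

lemma other_ne (i : Fin 2) : other i ≠ i := by fin_cases i <;> decide

lemma supply_add_e (T : ℕ) (x : Fin 2 → ℕ) (j : Fin 2) :
    supply T (x + e j) = supply T x - 1 := by
  fin_cases j <;> simp [supply, e] <;> omega

lemma val_add_e_self (v : Fin 2 → ℕ → ℝ) (i : Fin 2) (k : ℕ) (x : Fin 2 → ℕ) :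
    val v i k (x + e i) = val v i (k + 1) x := by
  simp only [_root_.val, e, Pi.add_apply, Pi.single_eq_same]
  ac_rfl

lemma val_add_e_of_ne (v : Fin 2 → ℕ → ℝ) {i j : Fin 2} (h : j ≠ i) (k : ℕ) (x : Fin 2 → ℕ) :
    val v j k (x + e i) = val v j k x := by
  simp [_root_.val, e, Pi.single_eq_of_ne h]

lemma Admissible.val_anti {v : Fin 2 → ℕ → ℝ} (hv : Admissible v) (j : Fin 2)
    (x : Fin 2 → ℕ) {a b : ℕ} (hab : a ≤ b) : val v j b x ≤ val v j a x :=
  antitone_nat_of_succ_le (fun n => (hv j n).2) (Nat.add_le_add_left hab (x j))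

section Greedy

variable (T : ℕ) (v : Fin 2 → ℕ → ℝ) (i : Fin 2) (x : Fin 2 → ℕ)

lemma gbar_zero : gbar T v i 0 x = 0 := by simp [gbar]

lemma gbar_le_gu {k : ℕ} (hk : k ≤ supply T x) : gbar T v i k x ≤ gu T v i x :=
  le_sup' (fun k => gbar T v i k x) (mem_range.mpr (Nat.lt_succ_of_le hk))

lemma gu_nonneg : 0 ≤ gu T v i x :=
  gbar_zero T v i x ▸ gbar_le_gu T v i x (Nat.zero_le _)

lemma gd_le_supply_and_gbar_gd_eq_gu :
    gd T v i x ≤ supply T x ∧ gbar T v i (gd T v i x) x = gu T v i x := by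
  obtain ⟨k, hk, hmax⟩ := exists_mem_eq_sup' nonempty_range_add_one (fun k => gbar T v i k x)
  exact Nat.sInf_mem (s := {k | k ≤ supply T x ∧ gbar T v i k x = gu T v i x})
    ⟨k, Nat.le_of_lt_succ (mem_range.mp hk), hmax.symm⟩

lemma val_one_add_gbar_add_e_self (k : ℕ) :
    val v i 1 x + gbar T v i k (x + e i)
      = gbar T v i (k + 1) x + val v (other i) (supply T x - (k + 1) + 1) x := by
  have hsupply : supply T x - 1 - k = supply T x - (k + 1) := by omega
  simp only [gbar, supply_add_e, val_add_e_self, val_add_e_of_ne v (other_ne i), hsupply,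
    sum_Icc_one_succ]
  push_cast
  ring

lemma gbar_add_e_other {k : ℕ} (hk : k < supply T x) :
    gbar T v i k (x + e (other i)) = gbar T v i k x := by
  have hsupply : supply T x - 1 - k + 1 + 1 = supply T x - k + 1 := by omega
  simp only [gbar, supply_add_e, val_add_e_self, val_add_e_of_ne v (other_ne i).symm, hsupply]

lemma gu_add_e_other_le : gu T v i (x + e (other i)) ≤ gu T v i x := by
  refine sup'_le _ _ fun k hk => ?_
  rw [mem_range, supply_add_e] at hk
  rcases Nat.eq_zero_or_pos k with rfl | hk0
  · rw [gbar_zero]; exact gu_nonneg T v i x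
  · rw [gbar_add_e_other T v i x (by omega)]; exact gbar_le_gu T v i x (by omega)

lemma df_eq_zero_iff : df T v i x = 0 ↔ ∀ k, 1 ≤ k → k ≤ supply T x →
    val v i k x ≤ val v (other i) (supply T x - k + 1) x := by
  have hbdd : BddAbove {k | 1 ≤ k ∧ k ≤ supply T x ∧
      val v (other i) (supply T x - k + 1) x < val v i k x} := ⟨supply T x, fun k hk => hk.2.1⟩
  constructor
  · intro h k hk1 hkt
    by_contra! hlt
    have := le_csSup hbdd ⟨hk1, hkt, hlt⟩
    simp only [df] at h
    omega
  · intro h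
    have hempty : {k | 1 ≤ k ∧ k ≤ supply T x ∧
        val v (other i) (supply T x - k + 1) x < val v i k x} = ∅ :=
      Set.eq_empty_of_forall_notMem fun k hk => (h k hk.1 hk.2.1).not_gt hk.2.2
    rw [df, hempty, csSup_empty, Nat.bot_eq_zero]

end Greedy

section Monotone

variable {T : ℕ} {v : Fin 2 → ℕ → ℝ} {i : Fin 2} {x : Fin 2 → ℕ}

lemma gu_nonpos_of_df_eq_zero (hv : Admissible v) (hdf : df T v i x = 0) : gu T v i x ≤ 0 := by
  refine sup'_le _ _ fun k hk => ?_
  have hkt := Nat.le_of_lt_succ (mem_range.mp hk)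
  have hsum : ∑ j ∈ Icc 1 k, val v i j x ≤ ∑ _j ∈ Icc 1 k, val v (other i) (supply T x - k + 1) x :=
    sum_le_sum fun j hj => by
      rw [mem_Icc] at hj
      calc val v i j x ≤ val v (other i) (supply T x - j + 1) x :=
            (df_eq_zero_iff T v i x).mp hdf j hj.1 (hj.2.trans hkt)
        _ ≤ val v (other i) (supply T x - k + 1) x := hv.val_anti _ _ (by omega)
  simp only [sum_const, Nat.card_Icc, Nat.add_sub_cancel, nsmul_eq_mul] at hsum
  simp only [gbar]
  linarith

lemma gd_ne_zero_of_df_ne_zero (hv : Admissible v) (hdf : df T v i x ≠ 0) : gd T v i x ≠ 0 := by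
  obtain ⟨k, hk1, hkt, hlt⟩ : ∃ k, 1 ≤ k ∧ k ≤ supply T x ∧
      ¬ val v i k x ≤ val v (other i) (supply T x - k + 1) x := by
    simpa using mt (df_eq_zero_iff T v i x).mpr hdf
  have hgbar_one : 0 < gbar T v i 1 x := by
    have h1 := hv.val_anti i x hk1
    have h2 := hv.val_anti (other i) x (show supply T x - k + 1 ≤ supply T x - 1 + 1 by omega)
    simp only [gbar, Icc_self, sum_singleton, Nat.cast_one, one_mul]
    linarith
  intro h
  have := gbar_le_gu T v i x (show 1 ≤ supply T x by omega)
  have := (gd_le_supply_and_gbar_gd_eq_gu T v i x).2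
  rw [h, gbar_zero] at this
  linarith

end Monotone

theorem stmt5_general (T : ℕ) (v : Fin 2 → ℕ → ℝ) (hv : Admissible v)
    (x : Fin 2 → ℕ) (i : Fin 2) :
    base T v i x ≤ tp T v i x := by
  have hz := gu_add_e_other_le T v i x
  unfold base tp
  split_ifs with hdf
  · linarith [gu_nonneg T v i (x + e i), gu_nonpos_of_df_eq_zero hv hdf]
  · obtain ⟨hκt, hκ⟩ := gd_le_supply_and_gbar_gd_eq_gu T v i x
    obtain ⟨k, hk⟩ := Nat.exists_eq_succ_of_ne_zero (gd_ne_zero_of_df_ne_zero hv hdf)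
    rw [hk] at hκt hκ ⊢
    have hy := gbar_le_gu T v i (x + e i) (k := k) (by rw [supply_add_e]; omega)
    linarith [val_one_add_gbar_add_e_self T v i x k]

/-- The threshold price is at least the baseline price. -/
theorem stmt5 (T : ℕ) (v : Fin 2 → ℕ → ℝ) (hv : Admissible v)
    (x : Fin 2 → ℕ) (hx : IsDecision T x) (i : Fin 2) :
    base T v i x ≤ tp T v i x :=
  stmt5_general T v hv x i

end
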